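/- Let H be an infinite-dimensional separable real Hilbert space and 𝒳 = {x ∈ H : ‖x‖ ≤ 1} its closed unit ball. For an integer n ≥ 2 let ℱ = {x ↦ (1 + ⟨w, x⟩)/2 : w ∈ H, ‖w‖ ≤ 1} and ℱ_{1/n} = {x ↦ (1 + ⟨w, x⟩)/2 : w ∈ H, ‖w‖ ≤ 1 − 1/n}, both subsets of [0,1]^𝒳. Then the minimax regrets satisfy ℛ_n(ℱ) ≤ ℛ_n(ℱ_{1/n}) + 2. -/

import Mathlib

open scoped ENNReal

/-- Logarithmic loss ℓ(p, y) = −y log p − (1−y) log(1−p) ∈ [0,∞], for p ∈ [0,1] and y ∈ {0,1}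
(encoded as `Bool`); the loss is +∞ when the predicted probability of the realized outcome
vanishes. -/
noncomputable def logLoss (p : ℝ) (y : Bool) : ℝ≥0∞ :=
  if (if y then p else 1 - p) ≤ 0 then ⊤
  else ENNReal.ofReal (- Real.log (if y then p else 1 - p))

/-- The n-round alternated value sup_{x_t ∈ X} inf_{p̂_t ∈ [0,1]} sup_{y_t ∈ {0,1}} of a payoff
depending on the sequences (x_1,…,x_n), (p̂_1,…,p̂_n), (y_1,…,y_n). -/
noncomputable def gameVal {X : Type*} :
    (n : ℕ) → ((Fin n → X) → (Fin n → ℝ) → (Fin n → Bool) → EReal) → EReal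
  | 0, payoff => payoff Fin.elim0 Fin.elim0 Fin.elim0
  | n + 1, payoff =>
      ⨆ x : X, ⨅ p : Set.Icc (0 : ℝ) 1, ⨆ y : Bool,
        gameVal n fun xs ps ys => payoff (Fin.cons x xs) (Fin.cons (p : ℝ) ps) (Fin.cons y ys)

/-- Minimax regret ℛ_n(ℱ) of sequential probability assignment with side information:
the alternated value of Σ_t ℓ(p̂_t, y_t) − inf_{f∈ℱ} Σ_t ℓ(f(x_t), y_t), in the extended
reals. -/
noncomputable def minimaxRegret {X : Type*} (n : ℕ) (F : Set (X → ℝ)) : EReal :=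
  gameVal n fun xs ps ys =>
    ((∑ t, logLoss (ps t) (ys t) : ℝ≥0∞) : EReal)
      - ((⨅ f ∈ F, ∑ t, logLoss (f (xs t)) (ys t) : ℝ≥0∞) : EReal)

/-!
Shrinking a weight `w` to `(1 - 1/n) w` turns the predictor `f = (1 + ⟪w, ·⟫) / 2` into the
mixture `(1 - 1/n) f + 1/(2n)` of `f` with the uniform prediction `1/2`. Every probability this
assigns to an outcome is at least `1 - 1/n` times the one assigned by `f`, so each round's log
loss grows by at most `-log (1 - 1/n)`, and `n` rounds by at most `n / (n - 1) ≤ 2`. Thus on every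
play the comparator term of the regret drops by at most `2`, and the alternated game value,
which commutes with adding a real constant, inherits the bound.
-/

namespace EReal

noncomputable def addRightOrderIso (c : ℝ) : EReal ≃o EReal where
  toFun x := x + c
  invFun x := x - c
  left_inv _ := add_sub_cancel_right
  right_inv _ := sub_add_cancel
  map_rel_iff' := (addLECancellable_coe c).add_le_add_iff_right

lemma sub_le_sub_add_of_le_add {a b b' : EReal} {c : ℝ} (h : b' ≤ b + c) :
    a - b ≤ a - b' + c := by
  have hb' : b' - c ≤ b := (sub_le_iff_le_add (.inl (coe_ne_bot c)) (.inl (coe_ne_top c))).2 h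
  calc a - b ≤ a - (b' - c) := sub_le_sub le_rfl hb'
    _ = a - b' + c := by
      rw [sub_eq_add_neg a, neg_sub (.inr (coe_ne_bot c)) (.inr (coe_ne_top c)), ← add_assoc,
        sub_eq_add_neg]

end EReal

/-- The log loss viewed as a function of the probability given to the realized outcome. -/
lemma ite_neg_log_le_add_of_mul_le {q q' lam : ℝ} (hlam : 0 < lam) (hq' : lam * q ≤ q') :
    (if q' ≤ 0 then ⊤ else ENNReal.ofReal (-Real.log q')) ≤
      (if q ≤ 0 then ⊤ else ENNReal.ofReal (-Real.log q)) + ENNReal.ofReal (-Real.log lam) := by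
  by_cases hq : q ≤ 0
  · simp [hq]
  have hq₀ : 0 < q := not_le.1 hq
  have hq'₀ : 0 < q' := lt_of_lt_of_le (by positivity) hq'
  rw [if_neg hq, if_neg hq'₀.not_ge]
  calc ENNReal.ofReal (-Real.log q')
      ≤ ENNReal.ofReal (-Real.log q + -Real.log lam) := by
        gcongr
        have := Real.log_le_log (by positivity) hq'
        rw [Real.log_mul hlam.ne' hq₀.ne'] at this
        linarith
    _ ≤ _ := ENNReal.ofReal_add_le

lemma logLoss_mix_half_le (p : ℝ) (y : Bool) {lam : ℝ} (hlam₀ : 0 < lam) (hlam₁ : lam ≤ 1) :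
    logLoss (lam * p + (1 - lam) / 2) y ≤ logLoss p y + ENNReal.ofReal (-Real.log lam) := by
  unfold logLoss
  apply ite_neg_log_le_add_of_mul_le hlam₀
  cases y <;> simp only [Bool.false_eq_true, ↓reduceIte] <;> nlinarith

lemma natCast_mul_neg_log_one_sub_inv_le_two {n : ℕ} (hn : 2 ≤ n) :
    n * -Real.log (1 - 1 / n) ≤ 2 := by
  have hn' : (2 : ℝ) ≤ n := by exact_mod_cast hn
  have hpos : 0 < 1 - 1 / (n : ℝ) := by
    rw [sub_pos, div_lt_one (by linarith)]; linarith
  have hlog := Real.one_sub_inv_le_log_of_pos hpos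
  have hne : (n : ℝ) - 1 ≠ 0 := by linarith
  have hinv : (1 - 1 / (n : ℝ))⁻¹ = n / (n - 1) := by
    field_simp
  rw [hinv] at hlog
  calc (n : ℝ) * -Real.log (1 - 1 / n) ≤ n * (n / (n - 1) - 1) := by gcongr; linarith
    _ = n / (n - 1) := by field_simp; ring
    _ ≤ 2 := by rw [div_le_iff₀ (by linarith)]; linarith

section Game

variable {X : Type*}

lemma gameVal_mono :
    ∀ {n : ℕ} {g₁ g₂ : (Fin n → X) → (Fin n → ℝ) → (Fin n → Bool) → EReal},
      (∀ xs ps ys, g₁ xs ps ys ≤ g₂ xs ps ys) → gameVal n g₁ ≤ gameVal n g₂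
  | 0, _, _, h => h _ _ _
  | _ + 1, _, _, h =>
    iSup_mono fun _ => iInf_mono fun _ => iSup_mono fun _ => gameVal_mono fun _ _ _ => h _ _ _

lemma gameVal_comp_orderIso (φ : EReal ≃o EReal) :
    ∀ {n : ℕ} (g : (Fin n → X) → (Fin n → ℝ) → (Fin n → Bool) → EReal),
      gameVal n (fun xs ps ys => φ (g xs ps ys)) = φ (gameVal n g)
  | 0, _ => rfl
  | _ + 1, g => by
    simp only [gameVal, gameVal_comp_orderIso φ, OrderIso.map_iSup, OrderIso.map_iInf]

lemma gameVal_add_coe {n : ℕ} (g : (Fin n → X) → (Fin n → ℝ) → (Fin n → Bool) → EReal)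
    (c : ℝ) : gameVal n (fun xs ps ys => g xs ps ys + c) = gameVal n g + c :=
  gameVal_comp_orderIso (EReal.addRightOrderIso c) g

lemma iInf_sum_logLoss_le_add {n : ℕ} {F F' : Set (X → ℝ)} {c : ℝ≥0∞}
    (h : ∀ f ∈ F, ∃ f' ∈ F', ∀ x y, logLoss (f' x) y ≤ logLoss (f x) y + c)
    (xs : Fin n → X) (ys : Fin n → Bool) :
    ⨅ f ∈ F', ∑ t, logLoss (f (xs t)) (ys t) ≤
      (⨅ f ∈ F, ∑ t, logLoss (f (xs t)) (ys t)) + n * c := by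
  simp only [ENNReal.iInf_add]
  refine le_iInf₂ fun f hf => ?_
  obtain ⟨f', hf', hle⟩ := h f hf
  calc ⨅ f ∈ F', ∑ t, logLoss (f (xs t)) (ys t)
      ≤ ∑ t, logLoss (f' (xs t)) (ys t) := iInf₂_le f' hf'
    _ ≤ ∑ t, (logLoss (f (xs t)) (ys t) + c) := Finset.sum_le_sum fun t _ => hle _ _
    _ = ∑ t, logLoss (f (xs t)) (ys t) + n * c := by
      rw [Finset.sum_add_distrib, Finset.sum_const, Finset.card_univ, Fintype.card_fin,
        nsmul_eq_mul]

lemma minimaxRegret_le_add_of_forall_exists_logLoss_le (n : ℕ)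
    {F F' : Set (X → ℝ)} {c : ℝ} (hc : 0 ≤ c)
    (h : ∀ f ∈ F, ∃ f' ∈ F', ∀ x y, logLoss (f' x) y ≤ logLoss (f x) y + ENNReal.ofReal c) :
    minimaxRegret n F ≤ minimaxRegret n F' + (n * c : ℝ) := by
  rw [minimaxRegret, minimaxRegret, ← gameVal_add_coe]
  refine gameVal_mono fun xs ps ys => EReal.sub_le_sub_add_of_le_add ?_
  have hnc : ((n * ENNReal.ofReal c : ℝ≥0∞) : EReal) = (n * c : ℝ) := by
    rw [← ENNReal.ofReal_natCast, ← ENNReal.ofReal_mul (Nat.cast_nonneg n),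
      EReal.coe_ennreal_ofReal, max_eq_left (by positivity)]
  rw [← hnc, ← EReal.coe_ennreal_add, EReal.coe_ennreal_le_coe_ennreal_iff]
  exact iInf_sum_logLoss_le_add h xs ys

end Game

open scoped RealInnerProductSpace in
theorem stmt10 {H : Type*} [NormedAddCommGroup H] [InnerProductSpace ℝ H]
    (n : ℕ) (hn : 2 ≤ n) :
    minimaxRegret n
        {f : {x : H // ‖x‖ ≤ 1} → ℝ |
          ∃ w : H, ‖w‖ ≤ 1 ∧ ∀ x, f x = (1 + ⟪w, (x : H)⟫) / 2} ≤
      minimaxRegret n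
          {f : {x : H // ‖x‖ ≤ 1} → ℝ |
            ∃ w : H, ‖w‖ ≤ 1 - 1 / (n : ℝ) ∧ ∀ x, f x = (1 + ⟪w, (x : H)⟫) / 2} + 2 := by
  have hloss := natCast_mul_neg_log_one_sub_inv_le_two hn
  set lam : ℝ := 1 - 1 / n
  have hlam₀ : 0 < lam := by
    have : 1 / (n : ℝ) ≤ 1 / 2 := by gcongr; exact_mod_cast hn
    linarith
  have hlam₁ : lam ≤ 1 := by simp only [lam]; linarith [show 0 ≤ 1 / (n : ℝ) by positivity]
  refine (minimaxRegret_le_add_of_forall_exists_logLoss_le n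
    (neg_nonneg.2 (Real.log_nonpos hlam₀.le hlam₁)) ?_).trans (add_le_add le_rfl ?_)
  · rintro f ⟨w, hw, hf⟩
    refine ⟨_, ⟨lam • w, ?_, fun x => rfl⟩, fun x y => ?_⟩
    · rw [norm_smul, Real.norm_of_nonneg hlam₀.le]
      exact mul_le_of_le_one_right hlam₀.le hw
    · have hmix : (1 + ⟪lam • w, (x : H)⟫) / 2 = lam * f x + (1 - lam) / 2 := by
        rw [hf, real_inner_smul_left]; ring
      rw [hmix]
      exact logLoss_mix_half_le _ y hlam₀ hlam₁
  · exact EReal.coe_le_coe_iff.2 hloss
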